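/- Let N ≥ 3, let a : ℝ → (0,∞)^{2N} be a differentiable solution of the periodic Volterra lattice equations ȧ_j = a_j(a_{j+1} − a_{j−1}), and fix n ≥ 1. Writing M(t) = L(a(t))^{2n}, for every j (indices mod 2N) and every t one has d/dt M(t)_{j,j} = √(a_{j−2}(t) a_{j−1}(t)) · M(t)_{j,j−2} − √(a_j(t) a_{j+1}(t)) · M(t)_{j,j+2}. -/

import Mathlib

/-!
Writing `s = √a`, the Volterra equations say exactly that `L = L(a)` satisfies the Lax equation
`L' = [B, L]` with `B = ½ ∑ₖ √(aₖ aₖ₊₁) (E_{k+2,k} - E_{k,k+2})`. Hence `(L^m)' = [B, L^m]` for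
every `m`. For `m = 2n` the matrix `M = L^m` is symmetric while `B` is antisymmetric, so
`[B, M]_{jj} = 2 (B M)_{jj}`, and row `j` of `B` has only the two entries in columns `j ∓ 2`.
-/

open Matrix

instance neZeroTwoMul (N : ℕ) [NeZero N] : NeZero (2 * N) :=
  ⟨by have := NeZero.ne N; omega⟩

/-- `Emat N r s` is the `2N × 2N` real matrix with a `1` in position `(r, s)`
and zeros elsewhere, indices taken mod `2N`. -/
noncomputable def Emat (N : ℕ) [NeZero N] (r s : ZMod (2 * N)) :
    Matrix (ZMod (2 * N)) (ZMod (2 * N)) ℝ :=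
  Matrix.single r s 1

/-- The antisymmetric Lax matrix of the Volterra lattice:
`L(a) = ∑ j, √(a j) • (E_{j,j+1} - E_{j+1,j})`. -/
noncomputable def LaxL (N : ℕ) [NeZero N] (a : ZMod (2 * N) → ℝ) :
    Matrix (ZMod (2 * N)) (ZMod (2 * N)) ℝ :=
  ∑ j : ZMod (2 * N), Real.sqrt (a j) • (Emat N j (j + 1) - Emat N (j + 1) j)

namespace Matrix

lemma commutator_apply_self_of_transpose_eq_neg {n R : Type*} [Fintype n] [CommRing R]
    {B M : Matrix n n R} (hB : Bᵀ = -B) (hM : M.IsSymm) (i : n) :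
    (B * M - M * B) i i = 2 * (B * M) i i := by
  have hMB : (M * B) i i = -(B * M) i i := by
    rw [← transpose_apply (M * B), transpose_mul, hB, hM.eq, neg_mul, neg_apply]
  rw [Matrix.sub_apply, hMB]
  ring

variable {G R : Type*} [DecidableEq G]

def bandMatrix [Add G] [Zero R] (f : G → R) (d : G) : Matrix G G R :=
  of fun i j => if j = i + d then f i else 0

@[simp]
lemma bandMatrix_apply [Add G] [Zero R] (f : G → R) (d i j : G) :
    bandMatrix f d i j = if j = i + d then f i else 0 := rfl

lemma transpose_bandMatrix [AddGroup G] [Zero R] (f : G → R) (d : G) :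
    (bandMatrix f d)ᵀ = bandMatrix (fun i => f (i - d)) (-d) := by
  ext i j
  simp only [transpose_apply, bandMatrix_apply, ← sub_eq_add_neg, eq_sub_iff_add_eq,
    eq_comm (a := i)]
  split_ifs with h
  · rw [← h, add_sub_cancel_right]
  · rfl

lemma sum_smul_single_eq_bandMatrix [Fintype G] [Add G] [Semiring R] (f : G → R) (d : G) :
    ∑ i, f i • single i (i + d) (1 : R) = bandMatrix f d := by
  ext p q
  simp [sum_apply, single_apply, ite_and, eq_comm (a := q)]

lemma bandMatrix_mul_apply [Fintype G] [Add G] [NonUnitalNonAssocSemiring R] (f : G → R)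
    (d : G) (M : Matrix G G R) (i j : G) : (bandMatrix f d * M) i j = f i * M (i + d) j := by
  simp [mul_apply, ite_mul]

lemma bandMatrix_mul_bandMatrix [Fintype G] [AddSemigroup G] [NonUnitalNonAssocSemiring R]
    (f g : G → R) (d e : G) :
    bandMatrix f d * bandMatrix g e = bandMatrix (fun i => f i * g (i + d)) (d + e) := by
  ext i j
  simp [bandMatrix_mul_apply, add_assoc, mul_ite]

end Matrix

lemma HasDerivAt.fun_pow_of_commutator {𝕜 𝔸 : Type*} [NontriviallyNormedField 𝕜]
    [NormedRing 𝔸] [NormedAlgebra 𝕜 𝔸] {L : 𝕜 → 𝔸} {B : 𝔸} {t : 𝕜}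
    (h : HasDerivAt L (B * L t - L t * B) t) (m : ℕ) :
    HasDerivAt (fun u => L u ^ m) (B * L t ^ m - L t ^ m * B) t := by
  induction m with
  | zero => simpa using hasDerivAt_const t (1 : 𝔸)
  | succ m ih =>
    simp_rw [pow_succ]
    exact (ih.mul h).congr_deriv (by noncomm_ring)

lemma LinearMap.comp_hasDerivAt {𝕜 E F : Type*} [NontriviallyNormedField 𝕜] [CompleteSpace 𝕜]
    [NormedAddCommGroup E] [NormedSpace 𝕜 E] [FiniteDimensional 𝕜 E]
    [NormedAddCommGroup F] [NormedSpace 𝕜 F] (φ : E →ₗ[𝕜] F) {f : 𝕜 → E} {f' : E} {t : 𝕜}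
    (hf : HasDerivAt f f' t) : HasDerivAt (fun u => φ (f u)) (φ f') t :=
  (LinearMap.toContinuousLinearMap φ).hasFDerivAt.comp_hasDerivAt t hf

lemma HasDerivAt.sqrt_of_eq_mul {f : ℝ → ℝ} {c t : ℝ} (hf : HasDerivAt f (f t * c) t)
    (hpos : 0 < f t) : HasDerivAt (fun u => √(f u)) (2⁻¹ * (√(f t) * c)) t := by
  convert hf.sqrt hpos.ne' using 1
  field_simp
  rw [Real.sq_sqrt hpos.le, mul_comm]

attribute [local instance] Matrix.linftyOpNormedRing Matrix.linftyOpNormedAlgebra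

namespace Volterra

variable {G R : Type*} [CommRing G] [DecidableEq G] [CommRing R]

def laxMatrix (s : G → R) : Matrix G G R :=
  bandMatrix s 1 - (bandMatrix s 1)ᵀ

/-- Twice the `B` of the Lax pair, which keeps it defined over any commutative ring. -/
def laxPartner (s : G → R) : Matrix G G R :=
  (bandMatrix (fun i => s i * s (i + 1)) 2)ᵀ - bandMatrix (fun i => s i * s (i + 1)) 2

lemma transpose_laxMatrix (s : G → R) : (laxMatrix s)ᵀ = -laxMatrix s := by
  rw [laxMatrix, transpose_sub, transpose_transpose, neg_sub]

lemma transpose_laxPartner (s : G → R) : (laxPartner s)ᵀ = -laxPartner s := by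
  rw [laxPartner, transpose_sub, transpose_transpose, neg_sub]

lemma isSymm_laxMatrix_pow_two_mul [Fintype G] (s : G → R) (n : ℕ) :
    (laxMatrix s ^ (2 * n)).IsSymm := by
  rw [IsSymm, transpose_pow, transpose_laxMatrix, (even_two_mul n).neg_pow]

lemma laxMatrix_eq_sum [Fintype G] (s : G → R) :
    laxMatrix s = ∑ j, s j • (single j (j + 1) 1 - single (j + 1) j 1) := by
  simp only [laxMatrix, ← sum_smul_single_eq_bandMatrix, transpose_sum, transpose_smul,
    transpose_single, smul_sub, Finset.sum_sub_distrib]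

lemma laxMatrix_smul [Fintype G] (c : R) (s : G → R) : laxMatrix (c • s) = c • laxMatrix s := by
  simp only [laxMatrix_eq_sum, Pi.smul_apply, smul_assoc, Finset.smul_sum]

lemma laxPartner_mul_sub_mul_laxPartner [Fintype G] (s : G → R) :
    laxPartner s * laxMatrix s - laxMatrix s * laxPartner s
      = laxMatrix (fun i => s i * (s (i + 1) ^ 2 - s (i - 1) ^ 2)) := by
  simp only [laxMatrix, laxPartner, transpose_bandMatrix, sub_mul, mul_sub,
    bandMatrix_mul_bandMatrix]
  ext p q
  simp only [Matrix.sub_apply, bandMatrix_apply]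
  -- The eight products lie on the diagonals `±1` and `±3`; those on `±3` cancel in pairs.
  ring_nf
  split_ifs <;> ring

lemma laxPartner_commutator_apply_self [Fintype G] (s : G → R) {M : Matrix G G R}
    (hM : M.IsSymm) (j : G) :
    (laxPartner s * M - M * laxPartner s) j j
      = 2 * (s (j - 2) * s (j - 1) * M j (j - 2) - s j * s (j + 1) * M j (j + 2)) := by
  rw [commutator_apply_self_of_transpose_eq_neg (transpose_laxPartner s) hM, laxPartner,
    transpose_bandMatrix, Matrix.sub_mul, Matrix.sub_apply, bandMatrix_mul_apply,
    bandMatrix_mul_apply, hM.apply j (j + -2), hM.apply j (j + 2)]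
  ring_nf

lemma hasDerivAt_laxMatrix [Fintype G] {s : ℝ → G → ℝ} {s' : G → ℝ} {t : ℝ}
    (hs : ∀ i, HasDerivAt (fun u => s u i) (s' i) t) :
    HasDerivAt (fun u => laxMatrix (s u)) (laxMatrix s') t := by
  simp only [laxMatrix_eq_sum]
  exact HasDerivAt.fun_sum fun i _ => (hs i).smul_const _

lemma hasDerivAt_laxMatrix_sqrt [Fintype G] {a : ℝ → G → ℝ} {t : ℝ} (hpos : ∀ i, 0 < a t i)
    (hvolt : ∀ i, HasDerivAt (fun u => a u i) (a t i * (a t (i + 1) - a t (i - 1))) t) :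
    HasDerivAt (fun u => laxMatrix fun i => √(a u i))
      (((2⁻¹ : ℝ) • laxPartner fun i => √(a t i)) * (laxMatrix fun i => √(a t i))
        - (laxMatrix fun i => √(a t i)) * ((2⁻¹ : ℝ) • laxPartner fun i => √(a t i))) t := by
  have hsq : ∀ i, a t i = √(a t i) ^ 2 := fun i => (Real.sq_sqrt (hpos i).le).symm
  have hs : ∀ i, HasDerivAt (fun u => √(a u i))
      (2⁻¹ * (√(a t i) * (√(a t (i + 1)) ^ 2 - √(a t (i - 1)) ^ 2))) t := fun i => by
    rw [← hsq, ← hsq]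
    exact (hvolt i).sqrt_of_eq_mul (hpos i)
  refine (hasDerivAt_laxMatrix hs).congr_deriv ?_
  rw [smul_mul_assoc, mul_smul_comm, ← smul_sub, laxPartner_mul_sub_mul_laxPartner,
    ← laxMatrix_smul]
  rfl

end Volterra

open Volterra in
lemma LaxL_eq_laxMatrix (N : ℕ) [NeZero N] (a : ZMod (2 * N) → ℝ) :
    LaxL N a = laxMatrix fun j => √(a j) := by
  rw [laxMatrix_eq_sum]
  rfl

open Volterra in
theorem deriv_diag_LaxL_pow_general (N : ℕ) [NeZero N] (n : ℕ)
    (a : ℝ → ZMod (2 * N) → ℝ)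
    (hpos : ∀ t j, 0 < a t j)
    (hvolt : ∀ t j, HasDerivAt (fun s => a s j) (a t j * (a t (j + 1) - a t (j - 1))) t) :
    ∀ (t : ℝ) (j : ZMod (2 * N)),
      HasDerivAt (fun s => (LaxL N (a s) ^ (2 * n)) j j)
        (Real.sqrt (a t (j - 2) * a t (j - 1)) * (LaxL N (a t) ^ (2 * n)) j (j - 2)
          - Real.sqrt (a t j * a t (j + 1)) * (LaxL N (a t) ^ (2 * n)) j (j + 2)) t := by
  intro t j
  have hpow := HasDerivAt.fun_pow_of_commutator
    (𝔸 := Matrix (ZMod (2 * N)) (ZMod (2 * N)) ℝ) (hasDerivAt_laxMatrix_sqrt (hpos t) (hvolt t))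
    (2 * n)
  have hdiag := (entryLinearMap ℝ ℝ j j).comp_hasDerivAt hpow
  simp only [LaxL_eq_laxMatrix, entryLinearMap_apply] at hdiag ⊢
  refine hdiag.congr_deriv ?_
  rw [smul_mul_assoc, mul_smul_comm, ← smul_sub, Matrix.smul_apply,
    laxPartner_commutator_apply_self _ (isSymm_laxMatrix_pow_two_mul _ _),
    Real.sqrt_mul (hpos t _).le, Real.sqrt_mul (hpos t _).le, smul_eq_mul]
  ring

/-- Along a differentiable positive solution of the periodic Volterra lattice, writing
`M(t) = L(a(t))^{2n}`, the diagonal entries satisfy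
`d/dt M(t)_{j,j} = √(a_{j−2} a_{j−1}) M(t)_{j,j−2} − √(a_j a_{j+1}) M(t)_{j,j+2}`. -/
theorem deriv_diag_LaxL_pow (N : ℕ) [NeZero N] (hN : 3 ≤ N) (n : ℕ) (hn : 1 ≤ n)
    (a : ℝ → ZMod (2 * N) → ℝ)
    (hpos : ∀ t j, 0 < a t j)
    (hvolt : ∀ t j, HasDerivAt (fun s => a s j) (a t j * (a t (j + 1) - a t (j - 1))) t) :
    ∀ (t : ℝ) (j : ZMod (2 * N)),
      HasDerivAt (fun s => (LaxL N (a s) ^ (2 * n)) j j)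
        (Real.sqrt (a t (j - 2) * a t (j - 1)) * (LaxL N (a t) ^ (2 * n)) j (j - 2)
          - Real.sqrt (a t j * a t (j + 1)) * (LaxL N (a t) ^ (2 * n)) j (j + 2)) t :=
  deriv_diag_LaxL_pow_general N n a hpos hvolt
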